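/- arXiv:math/9607225 — 3 statements merged into one kernel-verified Lean document; each statement's English description precedes it below -/
import Mathlib

section
/- Let V be a rank-r vector bundle on a smooth projective surface X sitting in an exact sequence 0 → V₁ → V → V/V₁ → 0 with V₁ of rank i (0 < i < r), F = c₁(V₁), both V₁ and V/V₁ satisfying the Bogomolov inequalities c₂(V₁) ≥ ((i-1)/(2i))·F² and c₂(V/V₁) ≥ ((r-i-1)/(2(r-i)))·(c₁(V)-F)². Then c₂(V) ≥ ((r-1)/(2r))·c₁(V)² − (rF − i·c₁(V))²/(2i(r−i)r), equivalently (rF − i·c₁(V))² ≥ −i(r−i)(r−1)·[2r·c₂(V)/(r−1) − c₁(V)²]. -/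
/-- Bogomolov-type inequality for an extension.
`V` is a rank-`r` bundle on a smooth projective surface sitting in
`0 → V₁ → V → V/V₁ → 0` with `rank V₁ = i`, `F = c₁(V₁)`.  The intersection
pairing on `Num(X) ⊗ ℚ` is modelled by a symmetric bilinear form `B`.
Whitney's formula and the Bogomolov inequalities for the two pieces imply the
stated lower bounds. -/
theorem stmt0 {M : Type*} [AddCommGroup M] [Module ℚ M]
    (B : LinearMap.BilinForm ℚ M) (hB : ∀ x y, B x y = B y x)
    (r i : ℤ) (hi : 0 < i) (hir : i < r)
    (F c1V : M) (c2V1 c2Q c2V : ℚ)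
    (hWhitney : c2V = c2V1 + c2Q + B F (c1V - F))
    (hBog1 : c2V1 ≥ ((i : ℚ) - 1) / (2 * (i : ℚ)) * B F F)
    (hBog2 : c2Q ≥ ((r : ℚ) - (i : ℚ) - 1) / (2 * ((r : ℚ) - (i : ℚ)))
        * B (c1V - F) (c1V - F)) :
    c2V ≥ ((r : ℚ) - 1) / (2 * (r : ℚ)) * B c1V c1V
        - B ((r : ℚ) • F - (i : ℚ) • c1V) ((r : ℚ) • F - (i : ℚ) • c1V)
            / (2 * (i : ℚ) * ((r : ℚ) - (i : ℚ)) * (r : ℚ))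
      ∧ B ((r : ℚ) • F - (i : ℚ) • c1V) ((r : ℚ) • F - (i : ℚ) • c1V)
          ≥ -((i : ℚ) * ((r : ℚ) - (i : ℚ)) * ((r : ℚ) - 1))
              * (2 * (r : ℚ) * c2V / ((r : ℚ) - 1) - B c1V c1V) := by
  have hiQ : (0:ℚ) < (i:ℚ) := by exact_mod_cast hi
  have hrQ : (1:ℚ) < (r:ℚ) := by exact_mod_cast lt_of_le_of_lt hi hir
  have hriQ : (0:ℚ) < (r:ℚ) - (i:ℚ) := by
    have : (i:ℚ) < (r:ℚ) := by exact_mod_cast hir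
    linarith
  have hr0 : (0:ℚ) < (r:ℚ) := by linarith
  set a := B F F with ha
  set b := B F c1V with hb
  set c := B c1V c1V with hc
  have hsym : B c1V F = b := (hB c1V F)
  have e1 : B F (c1V - F) = b - a := by simp [hb, ha]
  have e2 : B (c1V - F) (c1V - F) = c - 2 * b + a := by
    simp [map_sub, LinearMap.sub_apply, hsym, hb, ha, hc]; ring
  have e3 : B ((r : ℚ) • F - (i : ℚ) • c1V) ((r : ℚ) • F - (i : ℚ) • c1V)
      = (r:ℚ)^2 * a - 2 * (r:ℚ) * (i:ℚ) * b + (i:ℚ)^2 * c := by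
    simp [map_sub, map_smul, LinearMap.sub_apply, LinearMap.smul_apply,
      smul_eq_mul, hsym, hb, ha, hc]
    ring
  rw [e1] at hWhitney
  rw [e2] at hBog2
  have h1 : 2 * (i:ℚ) * c2V1 ≥ ((i:ℚ) - 1) * a := by
    have h := mul_le_mul_of_nonneg_left hBog1 (le_of_lt (by linarith : (0:ℚ) < 2 * (i:ℚ)))
    have hne : 2 * (i:ℚ) ≠ 0 := by positivity
    calc ((i:ℚ) - 1) * a = 2 * (i:ℚ) * (((i : ℚ) - 1) / (2 * (i : ℚ)) * a) := by
          field_simp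
      _ ≤ 2 * (i:ℚ) * c2V1 := h
  have h2 : 2 * ((r:ℚ) - (i:ℚ)) * c2Q ≥ ((r:ℚ) - (i:ℚ) - 1) * (c - 2 * b + a) := by
    have h := mul_le_mul_of_nonneg_left hBog2 (le_of_lt (by linarith : (0:ℚ) < 2 * ((r:ℚ) - (i:ℚ))))
    have hne : 2 * ((r:ℚ) - (i:ℚ)) ≠ 0 := by positivity
    calc ((r:ℚ) - (i:ℚ) - 1) * (c - 2 * b + a)
        = 2 * ((r:ℚ) - (i:ℚ)) * (((r : ℚ) - (i : ℚ) - 1) / (2 * ((r : ℚ) - (i : ℚ))) * (c - 2 * b + a)) := by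
          field_simp
      _ ≤ 2 * ((r:ℚ) - (i:ℚ)) * c2Q := h
  have H1 : (r:ℚ) * ((r:ℚ) - (i:ℚ)) * (((i:ℚ) - 1) * a)
      ≤ (r:ℚ) * ((r:ℚ) - (i:ℚ)) * (2 * (i:ℚ) * c2V1) :=
    mul_le_mul_of_nonneg_left h1 (le_of_lt (mul_pos hr0 hriQ))
  have H2 : (i:ℚ) * (r:ℚ) * (((r:ℚ) - (i:ℚ) - 1) * (c - 2 * b + a))
      ≤ (i:ℚ) * (r:ℚ) * (2 * ((r:ℚ) - (i:ℚ)) * c2Q) :=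
    mul_le_mul_of_nonneg_left h2 (le_of_lt (mul_pos hiQ hr0))
  have HW : 2 * (i:ℚ) * ((r:ℚ) - (i:ℚ)) * (r:ℚ) * c2V
      = 2 * (i:ℚ) * ((r:ℚ) - (i:ℚ)) * (r:ℚ) * (c2V1 + c2Q + (b - a)) := by
    rw [hWhitney]
  have key : 2 * (i:ℚ) * ((r:ℚ) - (i:ℚ)) * (r:ℚ) * c2V
      ≥ (i:ℚ) * ((r:ℚ) - (i:ℚ)) * ((r:ℚ) - 1) * c
        - ((r:ℚ)^2 * a - 2 * (r:ℚ) * (i:ℚ) * b + (i:ℚ)^2 * c) := by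
    nlinarith [H1, H2, HW]
  have hD : (0:ℚ) < 2 * (i:ℚ) * ((r:ℚ) - (i:ℚ)) * (r:ℚ) := by positivity
  constructor
  · rw [e3]
    have expand : ((r:ℚ) - 1) / (2 * (r:ℚ)) * c
          - ((r:ℚ)^2 * a - 2 * (r:ℚ) * (i:ℚ) * b + (i:ℚ)^2 * c)
            / (2 * (i:ℚ) * ((r:ℚ) - (i:ℚ)) * (r:ℚ))
        = ((i:ℚ) * ((r:ℚ) - (i:ℚ)) * ((r:ℚ) - 1) * c
            - ((r:ℚ)^2 * a - 2 * (r:ℚ) * (i:ℚ) * b + (i:ℚ)^2 * c))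
            / (2 * (i:ℚ) * ((r:ℚ) - (i:ℚ)) * (r:ℚ)) := by
      field_simp
    rw [expand, ge_iff_le, div_le_iff₀ hD]
    linarith [key]
  · rw [e3]
    have hr1 : (r:ℚ) - 1 ≠ 0 := by linarith
    have hexp : -((i : ℚ) * ((r : ℚ) - (i : ℚ)) * ((r : ℚ) - 1))
        * (2 * (r : ℚ) * c2V / ((r : ℚ) - 1) - c)
        = (i:ℚ) * ((r:ℚ) - (i:ℚ)) * ((r:ℚ) - 1) * c
          - 2 * (i:ℚ) * ((r:ℚ) - (i:ℚ)) * (r:ℚ) * c2V := by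
      field_simp
      ring
    rw [hexp]
    linarith [key]
end

section
/- Let e ≥ 0, c₂ ≥ 1 be integers and c₁ = σ + f in ℤσ ⊕ ℤf with σ² = −e, σ·f = 1, f² = 0, K_X = −2σ − (2+e)f. Let ζ = xσ − yf with x ≡ 2 (mod 3), y ≡ 1 (mod 3), x and y nonzero of the same sign, 3c₂ − c₁² > 0, and −4(3c₂ − c₁²) ≤ ζ² < 0. Define d_ζ(c₁,c₂) = −(3c₂ − c₁²)/3 + 2 + ζ²/6 + (K_X·ζ)/2. Then d_ζ(c₁,c₂) ≤ 0, with equality if and only if either ζ = 2σ − (3c₂−2)f, or e = 0 and ζ = −(3c₂−2)σ + 2f. -/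
/-- Intersection pairing on `Num(X) = ℤσ ⊕ ℤf` of a rational ruled surface with
invariant `e`:  `σ² = −e`, `σ·f = 1`, `f² = 0`. -/
def ip (e : ℤ) (u v : ℤ × ℤ) : ℤ := -e * u.1 * v.1 + u.1 * v.2 + u.2 * v.1

/-- The canonical divisor `K_X = −2σ − (2+e)f`. -/
def KX (e : ℤ) : ℤ × ℤ := (-2, -(2 + e))

lemma stmt5_key (e c₂ x y : ℤ) (he : 0 ≤ e)
    (hx3 : x % 3 = 2) (hy3 : y % 3 = 1)
    (hx : x ≠ 0) (hxy : 0 < x * y)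
    (hS : e * x ^ 2 + 2 * x * y ≤ 4 * (3 * c₂ - 2 + e)) :
    (e * x ^ 2 + 2 * x * y - 4 * (3 * c₂ - 2 + e)) - 3 * (x - 2) * (e * x + 2 * y + 4) ≤ 0 ∧
    ((e * x ^ 2 + 2 * x * y - 4 * (3 * c₂ - 2 + e)) - 3 * (x - 2) * (e * x + 2 * y + 4) = 0 ↔
      (x = 2 ∧ y = 3 * c₂ - 2) ∨ (e = 0 ∧ x = -(3 * c₂ - 2) ∧ y = -2)) := by
  have hB : 0 ≤ (x - 2) * (e * x + 2 * y + 4) := by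
    rcases hx.lt_or_gt with hxneg | hxpos
    · have hyneg : y < 0 := by nlinarith
      have hy2 : y ≤ -2 := by omega
      have hex : e * x ≤ 0 := mul_nonpos_of_nonneg_of_nonpos he hxneg.le
      nlinarith
    · have hypos : 0 < y := by nlinarith
      have hx2 : 2 ≤ x := by omega
      have hy1 : 1 ≤ y := hypos
      have hex : 0 ≤ e * x := mul_nonneg he hxpos.le
      nlinarith
  refine ⟨by nlinarith, ?_, ?_⟩
  · intro h
    have hA : e * x ^ 2 + 2 * x * y = 4 * (3 * c₂ - 2 + e) := by nlinarith
    have hB0 : (x - 2) * (e * x + 2 * y + 4) = 0 := by nlinarith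
    rcases mul_eq_zero.1 hB0 with h2 | h2
    · have hx2 : x = 2 := by omega
      subst hx2
      left
      refine ⟨rfl, by nlinarith⟩
    · -- e*x + 2*y + 4 = 0 forces the negative case
      rcases hx.lt_or_gt with hxneg | hxpos
      · have hyneg : y < 0 := by nlinarith
        have hy2 : y ≤ -2 := by omega
        have hex : e * x ≤ 0 := mul_nonpos_of_nonneg_of_nonpos he hxneg.le
        have hex0 : e * x = 0 := by omega
        have he0 : e = 0 := by
          rcases mul_eq_zero.1 hex0 with h | h
          · exact h
          · exact absurd h hx
        have hym2 : y = -2 := by omega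
        subst he0; subst hym2
        right
        refine ⟨rfl, by nlinarith, rfl⟩
      · have hypos : 0 < y := by nlinarith
        have hx2 : 2 ≤ x := by omega
        have hex : 0 ≤ e * x := mul_nonneg he hxpos.le
        omega
  · rintro (⟨rfl, rfl⟩ | ⟨rfl, rfl, rfl⟩) <;> ring

/-- Lemma 2.6(ii).  For `c₁ = σ + f` (so `c₁² = 2 − e`) and
`ζ = xσ − yf` with `x ≡ 2 (mod 3)`, `y ≡ 1 (mod 3)`, `x, y` nonzero of the
same sign, `3c₂ − c₁² > 0` and `−4(3c₂ − c₁²) ≤ ζ² < 0`, the quantity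
`d_ζ(c₁, c₂) = −(3c₂ − c₁²)/3 + 2 + ζ²/6 + (K_X·ζ)/2` is `≤ 0`, with equality
iff `ζ = 2σ − (3c₂−2)f`, or `e = 0` and `ζ = −(3c₂−2)σ + 2f`. -/
theorem stmt5 (e c₂ x y : ℤ) (he : 0 ≤ e)
    (hx3 : x % 3 = 2) (hy3 : y % 3 = 1)
    (hx : x ≠ 0) (hy : y ≠ 0) (hxy : 0 < x * y)
    (hdisc : 0 < 3 * c₂ - (2 - e))
    (hwall₁ : -(4 * (3 * c₂ - (2 - e))) ≤ ip e (x, -y) (x, -y))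
    (hwall₂ : ip e (x, -y) (x, -y) < 0) :
    (-(3 * (c₂ : ℚ) - (2 - (e : ℚ))) / 3 + 2 + (ip e (x, -y) (x, -y) : ℚ) / 6
        + (ip e (KX e) (x, -y) : ℚ) / 2) ≤ 0
    ∧ ((-(3 * (c₂ : ℚ) - (2 - (e : ℚ))) / 3 + 2 + (ip e (x, -y) (x, -y) : ℚ) / 6
        + (ip e (KX e) (x, -y) : ℚ) / 2) = 0
        ↔ (x = 2 ∧ y = 3 * c₂ - 2) ∨ (e = 0 ∧ x = -(3 * c₂ - 2) ∧ y = -2)) := by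
  have hS : e * x ^ 2 + 2 * x * y ≤ 4 * (3 * c₂ - 2 + e) := by
    simp only [ip] at hwall₁
    nlinarith [hwall₁]
  obtain ⟨hle, hiff⟩ := stmt5_key e c₂ x y he hx3 hy3 hx hxy hS
  set T : ℤ := (e * x ^ 2 + 2 * x * y - 4 * (3 * c₂ - 2 + e)) - 3 * (x - 2) * (e * x + 2 * y + 4)
    with hT
  have hD : (-(3 * (c₂ : ℚ) - (2 - (e : ℚ))) / 3 + 2 + (ip e (x, -y) (x, -y) : ℚ) / 6
      + (ip e (KX e) (x, -y) : ℚ) / 2) = (T : ℚ) / 12 := by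
    simp only [ip, KX, hT]
    push_cast
    ring
  rw [hD]
  constructor
  · apply div_nonpos_of_nonpos_of_nonneg
    · exact_mod_cast hle
    · norm_num
  · have h12 : ((T : ℚ) / 12 = 0) ↔ T = 0 := by
      rw [div_eq_zero_iff]
      constructor
      · rintro (h | h)
        · exact_mod_cast h
        · norm_num at h
      · intro h
        exact Or.inl (by exact_mod_cast h)
    rw [h12]
    exact hiff
end

section
/- Let X be a smooth projective surface and L₁, L₂ ample divisors. Let V be a rank-r bundle that is L₁-stable and L₂-unstable with Harder–Narasimhan filtration 0 ⊂ V₁ ⊂ V (length one). Then for i = rank V₁ and F = c₁(V₁): (rF − ic₁(V))·L₁ < 0 < (rF − ic₁(V))·L₂ and −i(r−i)(r−1)·[2r·c₂(V)/(r−1) − c₁(V)²] ≤ (rF − ic₁(V))² < 0. -/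
/-- Lemma 1.3.  `V` is rank-`r`, `L₁`-stable and
`L₂`-unstable with Harder–Narasimhan filtration `0 ⊂ V₁ ⊂ V` of length one,
`i = rank V₁`, `F = c₁(V₁)`.  The intersection pairing on `Num(X)` is the
symmetric bilinear form `B`; the Hodge index theorem and Bogomolov's
inequality for the `L₂`-semistable pieces `V₁`, `V/V₁` are assumed, together
with Whitney's formula and the slope inequalities expressing `L₁`-stability
and the Harder–Narasimhan property at `L₂`.  Then
`(rF − ic₁(V))·L₁ < 0 < (rF − ic₁(V))·L₂` and
`−i(r−i)(r−1)·[2r·c₂(V)/(r−1) − c₁(V)²] ≤ (rF − ic₁(V))² < 0`. -/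
theorem stmt11 {N : Type*} [AddCommGroup N] [Module ℤ N]
    (B : LinearMap.BilinForm ℤ N) (hB : ∀ x y, B x y = B y x)
    (L₁ L₂ : N) (hL₁ : 0 < B L₁ L₁) (hL₂ : 0 < B L₂ L₂) (hL₁₂ : 0 < B L₁ L₂)
    (hodge : ∀ D L : N, 0 < B L L → B D L = 0 →
        B D D ≤ 0 ∧ (B D D = 0 → ∀ E, B D E = 0))
    (r i : ℤ) (hi : 0 < i) (hir : i < r)
    (F c₁V : N) (c₂V c₂V₁ c₂Q : ℤ)
    (hstab : r * B F L₁ < i * B c₁V L₁)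
    (hHN : i * B c₁V L₂ < r * B F L₂)
    (hWhitney : c₂V = c₂V₁ + c₂Q + B F (c₁V - F))
    (hBog₁ : (i - 1) * B F F ≤ 2 * i * c₂V₁)
    (hBog₂ : (r - i - 1) * B (c₁V - F) (c₁V - F) ≤ 2 * (r - i) * c₂Q) :
    (B (r • F - i • c₁V) L₁ < 0 ∧ 0 < B (r • F - i • c₁V) L₂) ∧
    -((i : ℚ) * ((r : ℚ) - (i : ℚ)) * ((r : ℚ) - 1))
        * (2 * (r : ℚ) * (c₂V : ℚ) / ((r : ℚ) - 1) - (B c₁V c₁V : ℚ))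
      ≤ (B (r • F - i • c₁V) (r • F - i • c₁V) : ℚ)
    ∧ B (r • F - i • c₁V) (r • F - i • c₁V) < 0 := by
  -- abbreviations
  set D : N := r • F - i • c₁V with hD
  have hDL : ∀ L : N, B D L = r * B F L - i * B c₁V L := by
    intro L
    simp [hD, map_sub, map_smul, LinearMap.sub_apply, LinearMap.smul_apply,
      smul_eq_mul]
  have h1 : B D L₁ < 0 := by rw [hDL]; linarith
  have h2 : 0 < B D L₂ := by rw [hDL]; linarith
  -- Hodge index: D² < 0
  have hDD_neg : B D D < 0 := by
    set a : ℤ := B D L₂ with ha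
    set b : ℤ := -B D L₁ with hb
    have hbpos : 0 < b := by simp [hb]; linarith
    set Lt : N := a • L₁ + b • L₂ with hLt
    have hBLt : ∀ x : N, B x Lt = a * B x L₁ + b * B x L₂ := by
      intro x
      simp [hLt, map_add, map_smul, smul_eq_mul]
    have hLtx : ∀ x : N, B Lt x = a * B L₁ x + b * B L₂ x := by
      intro x
      simp [hLt, map_add, map_smul, LinearMap.add_apply, LinearMap.smul_apply,
        smul_eq_mul]
    have hLtLt : 0 < B Lt Lt := by
      rw [hLtx, hBLt, hBLt]
      have h21 : B L₂ L₁ = B L₁ L₂ := hB _ _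
      nlinarith [mul_pos h2 h2, mul_pos hbpos hbpos, mul_pos h2 hbpos,
        mul_pos hL₁ hL₂]
    have hDLt : B D Lt = 0 := by
      rw [hBLt]; simp [ha, hb]; ring
    obtain ⟨hle, heq⟩ := hodge D Lt hLtLt hDLt
    rcases lt_or_eq_of_le hle with h | h
    · exact h
    · exfalso
      have := heq h L₁
      linarith
  -- Bogomolov bound, integrally
  have hsym : B c₁V F = B F c₁V := hB _ _
  have hGG : B (c₁V - F) (c₁V - F)
      = B c₁V c₁V - 2 * B F c₁V + B F F := by
    simp [map_sub, LinearMap.sub_apply, hsym]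
    ring
  have hFG : B F (c₁V - F) = B F c₁V - B F F := by
    simp [map_sub]
  have hDD : B D D = r * r * B F F - 2 * r * i * B F c₁V
      + i * i * B c₁V c₁V := by
    simp [hD, map_sub, map_smul, LinearMap.sub_apply, LinearMap.smul_apply,
      smul_eq_mul, hsym]
    ring
  have hri : (0:ℤ) < r - i := by linarith
  have hb1 : r * (r - i) * ((i - 1) * B F F)
      ≤ r * (r - i) * (2 * i * c₂V₁) := by
    have : (0:ℤ) ≤ r * (r - i) := mul_nonneg (by linarith) (by linarith)
    exact mul_le_mul_of_nonneg_left hBog₁ this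
  have hb2 : r * i * ((r - i - 1) * B (c₁V - F) (c₁V - F))
      ≤ r * i * (2 * (r - i) * c₂Q) := by
    have : (0:ℤ) ≤ r * i := mul_nonneg (by linarith) (by linarith)
    exact mul_le_mul_of_nonneg_left hBog₂ this
  have keyZ : 0 ≤ B D D + 2 * r * i * (r - i) * c₂V
      - i * (r - i) * (r - 1) * B c₁V c₁V := by
    rw [hDD, hWhitney, hFG]
    rw [hGG] at hb2
    nlinarith [hb1, hb2]
  refine ⟨⟨h1, h2⟩, ?_, hDD_neg⟩
  -- rational inequality
  have hrQ : ((r:ℚ) - 1) ≠ 0 := by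
    have : (1:ℤ) < r := by linarith
    have : (1:ℚ) < (r:ℚ) := by exact_mod_cast this
    linarith
  have keyQ : (0:ℚ) ≤ (B D D : ℚ) + 2 * r * i * (r - i) * c₂V
      - i * (r - i) * (r - 1) * (B c₁V c₁V : ℚ) := by
    exact_mod_cast keyZ
  have hEq : -((i : ℚ) * ((r : ℚ) - (i : ℚ)) * ((r : ℚ) - 1))
        * (2 * (r : ℚ) * (c₂V : ℚ) / ((r : ℚ) - 1) - (B c₁V c₁V : ℚ))
      = -((i:ℚ) * (r - i) * (2 * r * c₂V))
        + i * (r - i) * (r - 1) * (B c₁V c₁V : ℚ) := by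
    field_simp
    ring
  rw [hEq]
  linarith
end
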